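/- arXiv:2605.12996 — 2 statements merged into one kernel-verified Lean document; each statement's English description precedes it below -/
import Mathlib

section
/- Let H : ℝ^n × ℝ^n → ℝ be continuously differentiable in its first variable, bounded below by a constant m := inf H > -∞, and satisfy |D_x H(x,p)| ≤ γ₁ (1 + |H(x,p)|) for all (x,p), where γ₁ > 0. Set γ₂ := 1 + 2|m|. Then for all x, y, p: H(y,p) ≤ e^{γ₁|x-y|} H(x,p) + γ₂ (e^{γ₁|x-y|} - 1). -/
/-!
Shifting `H(·, p)` by `γ₂ = 1 + 2|m|` makes it positive, and since `|H| ≤ H + 2|m|` the hypothesis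
on `D_x H` becomes the linear bound `‖D_x (H + γ₂)‖ ≤ γ₁ (H + γ₂)`. Grönwall's inequality along the
segment from `x` to `y` then gives `H(y, p) + γ₂ ≤ e^{γ₁|x - y|} (H(x, p) + γ₂)`.
-/

open Real

theorem abs_le_add_two_mul_abs_of_le {a m : ℝ} (h : m ≤ a) : |a| ≤ a + 2 * |m| := by
  rcases abs_cases a with ⟨ha, -⟩ | ⟨ha, -⟩
  · linarith [abs_nonneg m]
  · linarith [neg_abs_le m]

theorem norm_le_exp_mul_norm_of_norm_fderiv_le
    {E F : Type*} [NormedAddCommGroup E] [NormedSpace ℝ E]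
    [NormedAddCommGroup F] [NormedSpace ℝ F] {f : E → F} {K : ℝ}
    (hf : Differentiable ℝ f) (hf' : ∀ z, ‖fderiv ℝ f z‖ ≤ K * ‖f z‖) (x y : E) :
    ‖f y‖ ≤ exp (K * ‖y - x‖) * ‖f x‖ := by
  set c : ℝ → E := fun τ => x + τ • (y - x)
  have hc : ∀ τ, HasDerivAt c (y - x) τ := fun τ =>
    (((hasDerivAt_id τ).smul_const (y - x)).const_add x).congr_deriv (one_smul ℝ _)
  have hfc : ∀ τ, HasDerivAt (f ∘ c) (fderiv ℝ f (c τ) (y - x)) τ := fun τ =>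
    (hf (c τ)).hasFDerivAt.comp_hasDerivAt τ (hc τ)
  have bound : ∀ τ, ‖fderiv ℝ f (c τ) (y - x)‖ ≤ K * ‖y - x‖ * ‖(f ∘ c) τ‖ + 0 := fun τ =>
    calc ‖fderiv ℝ f (c τ) (y - x)‖ ≤ ‖fderiv ℝ f (c τ)‖ * ‖y - x‖ := (fderiv ℝ f (c τ)).le_opNorm _
      _ ≤ K * ‖f (c τ)‖ * ‖y - x‖ := by gcongr; exact hf' _
      _ = K * ‖y - x‖ * ‖(f ∘ c) τ‖ + 0 := by simp only [Function.comp_apply]; ring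
  have := norm_le_gronwallBound_of_norm_deriv_right_le (a := 0) (b := 1)
    (fun τ _ => (hfc τ).continuousAt.continuousWithinAt) (fun τ _ => (hfc τ).hasDerivWithinAt)
    le_rfl (fun τ _ => bound τ) 1 (by norm_num)
  simpa [c, gronwallBound_ε0, mul_comm] using this

theorem stmt_7_general (n : ℕ)
    (H : EuclideanSpace ℝ (Fin n) → EuclideanSpace ℝ (Fin n) → ℝ)
    (γ₁ m : ℝ)
    (hdiff : ∀ p, Differentiable ℝ (fun x => H x p))
    (hbound : ∀ x p, m ≤ H x p)
    (hDx : ∀ x p, ‖fderiv ℝ (fun x' => H x' p) x‖ ≤ γ₁ * (1 + |H x p|)) :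
    ∀ x y p, H y p ≤ Real.exp (γ₁ * ‖x - y‖) * H x p +
      (1 + 2 * |m|) * (Real.exp (γ₁ * ‖x - y‖) - 1) := by
  intro x y p
  have hγ₁ : 0 ≤ γ₁ := nonneg_of_mul_nonneg_left ((norm_nonneg _).trans (hDx 0 p))
    (by positivity)
  have hpos : ∀ z, 0 ≤ H z p + (1 + 2 * |m|) := fun z => by
    linarith [hbound z p, neg_abs_le m, abs_nonneg m]
  have hderiv : ∀ z, ‖fderiv ℝ (fun z' => H z' p + (1 + 2 * |m|)) z‖
      ≤ γ₁ * ‖H z p + (1 + 2 * |m|)‖ := fun z => by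
    rw [fderiv_add_const, Real.norm_of_nonneg (hpos z)]
    refine (hDx z p).trans (mul_le_mul_of_nonneg_left ?_ hγ₁)
    linarith [abs_le_add_two_mul_abs_of_le (hbound z p)]
  have key := norm_le_exp_mul_norm_of_norm_fderiv_le ((hdiff p).add_const _) hderiv x y
  rw [Real.norm_of_nonneg (hpos y), Real.norm_of_nonneg (hpos x), norm_sub_rev] at key
  linarith

theorem stmt_7 (n : ℕ)
    (H : EuclideanSpace ℝ (Fin n) → EuclideanSpace ℝ (Fin n) → ℝ)
    (γ₁ m : ℝ) (hγ₁ : 0 < γ₁)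
    (hdiff : ∀ p, Differentiable ℝ (fun x => H x p))
    (hcont : ∀ p, Continuous (fun x => fderiv ℝ (fun x' => H x' p) x))
    (hbound : ∀ x p, m ≤ H x p)
    (hDx : ∀ x p, ‖fderiv ℝ (fun x' => H x' p) x‖ ≤ γ₁ * (1 + |H x p|)) :
    ∀ x y p, H y p ≤ Real.exp (γ₁ * ‖x - y‖) * H x p +
      (1 + 2 * |m|) * (Real.exp (γ₁ * ‖x - y‖) - 1) :=
  stmt_7_general n H γ₁ m hdiff hbound hDx
end

section
/- Let f : ℝ → ℝ be continuously differentiable with f(0) = 0 and f'(s) ≥ d₀ > 0 for all |s| ≤ R, and suppose |f'(s) - f'(0)| ≤ K|s| for |s| ≤ R. Fix a bounded function û : X → ℝ with ‖û‖_∞ ≤ R₀ and set M := K ‖û‖_∞² / (2 d₀). Then for all λ > 0 with λ ≤ 1, Mλ ≤ 1, and λ‖û‖_∞ + Mλ² ≤ R: f(λ û(x) + M λ²) - λ f'(0) û(x) ≥ 0 for every x ∈ X. -/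
/-!
Write `f (λû + Mλ²) - λ f'(0) û = [f (λû + Mλ²) - f (λû)] + [f (λû) - f'(0) λû]`. By the mean
value theorem and `f' ≥ d₀` the first bracket is at least `d₀ M λ²`; by the Lipschitz bound on `f'`
at `0` the second is at least `-(K/2) λ² R₀²`. The choice `M = K R₀² / (2 d₀)` makes these cancel.
-/

open Set

theorem nonneg_of_mul_deriv_nonneg {φ : ℝ → ℝ} (hφ : Differentiable ℝ φ) (hφ0 : φ 0 = 0)
    {r : ℝ} (hsign : ∀ s, |s| ≤ r → 0 ≤ s * deriv φ s) {a : ℝ} (ha : |a| ≤ r) :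
    0 ≤ φ a := by
  have hr : ∀ s, |s| ≤ |a| → |s| ≤ r := fun s hs => hs.trans ha
  rcases le_or_gt 0 a with h0a | ha0
  · have hmono : MonotoneOn φ (Icc 0 a) := by
      refine monotoneOn_of_deriv_nonneg (convex_Icc 0 a) hφ.continuous.continuousOn
        hφ.differentiableOn fun s hs => ?_
      rw [interior_Icc] at hs
      refine nonneg_of_mul_nonneg_right (hsign s (hr s ?_)) hs.1
      rw [abs_of_pos hs.1, abs_of_nonneg h0a]
      exact hs.2.le
    simpa [hφ0] using hmono (left_mem_Icc.2 h0a) (right_mem_Icc.2 h0a) h0a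
  · have hanti : AntitoneOn φ (Icc a 0) := by
      refine antitoneOn_of_deriv_nonpos (convex_Icc a 0) hφ.continuous.continuousOn
        hφ.differentiableOn fun s hs => ?_
      rw [interior_Icc] at hs
      refine nonpos_of_mul_nonneg_right (hsign s (hr s ?_)) hs.2
      rw [abs_of_neg hs.2, abs_of_neg ha0]
      linarith [hs.1]
    simpa [hφ0] using hanti (left_mem_Icc.2 ha0.le) (right_mem_Icc.2 ha0.le) ha0.le

theorem neg_half_mul_sq_le_sub_deriv_zero_mul {f : ℝ → ℝ} (hf : Differentiable ℝ f)
    (hf0 : f 0 = 0) {K r : ℝ}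
    (hlip : ∀ s, |s| ≤ r → |deriv f s - deriv f 0| ≤ K * |s|) {a : ℝ} (ha : |a| ≤ r) :
    -(K / 2 * a ^ 2) ≤ f a - deriv f 0 * a := by
  set φ : ℝ → ℝ := fun s => f s - deriv f 0 * s + K / 2 * s ^ 2
  have hφ' : ∀ s, HasDerivAt φ (deriv f s - deriv f 0 + K * s) s := fun s => by
    refine (((hf s).hasDerivAt.fun_sub ((hasDerivAt_id' s).const_mul (deriv f 0))).fun_add
      ((hasDerivAt_pow 2 s).const_mul (K / 2))).congr_deriv ?_
    push_cast
    ring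
  have hsign : ∀ s, |s| ≤ r → 0 ≤ s * deriv φ s := fun s hs => by
    have hcross : -(K * (|s| * |s|)) ≤ s * (deriv f s - deriv f 0) :=
      calc -(K * (|s| * |s|)) = -(|s| * (K * |s|)) := by ring
        _ ≤ -(|s| * |deriv f s - deriv f 0|) := by gcongr; exact hlip s hs
        _ ≤ s * (deriv f s - deriv f 0) := by rw [← abs_mul]; exact neg_abs_le _
    have hsplit : s * deriv φ s = s * (deriv f s - deriv f 0) + K * (|s| * |s|) := by
      rw [(hφ' s).deriv, abs_mul_abs_self]; ring
    linarith
  have := nonneg_of_mul_deriv_nonneg (fun s => (hφ' s).differentiableAt) (by simp [φ, hf0])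
    hsign ha
  simp only [φ] at this
  linarith

theorem stmt_18_general {X : Type*} (f : ℝ → ℝ) (d₀ K R R₀ : ℝ)
    (hf : ContDiff ℝ 1 f) (hf0 : f 0 = 0) (hd₀ : 0 < d₀) (hK : 0 ≤ K)
    (hlow : ∀ s : ℝ, |s| ≤ R → d₀ ≤ deriv f s)
    (hlip : ∀ s : ℝ, |s| ≤ R → |deriv f s - deriv f 0| ≤ K * |s|)
    (uhat : X → ℝ) (huhat : ∀ x, |uhat x| ≤ R₀)
    (M : ℝ) (hM : M = K * R₀ ^ 2 / (2 * d₀))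
    (lam : ℝ) (hlam : 0 < lam)
    (hrange : lam * R₀ + M * lam ^ 2 ≤ R) :
    ∀ x, 0 ≤ f (lam * uhat x + M * lam ^ 2) - lam * deriv f 0 * uhat x := by
  intro x
  have hdf : Differentiable ℝ f := hf.differentiable one_ne_zero
  have hshift : 0 ≤ M * lam ^ 2 := by
    have : 0 ≤ R₀ := (abs_nonneg _).trans (huhat x)
    rw [hM]; positivity
  set a := lam * uhat x
  have ha : |a| ≤ lam * R₀ := by
    rw [abs_mul, abs_of_pos hlam]
    exact mul_le_mul_of_nonneg_left (huhat x) hlam.le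
  obtain ⟨ha₁, ha₂⟩ := abs_le.1 ha
  have hgrowth : d₀ * (M * lam ^ 2) ≤ f (a + M * lam ^ 2) - f a := by
    have := (convex_Icc (-R) R).mul_sub_le_image_sub_of_le_deriv hdf.continuous.continuousOn
      hdf.differentiableOn (fun s hs => hlow s (abs_le.2 (Ioo_subset_Icc_self
        (by rwa [interior_Icc] at hs)))) a ⟨by linarith, by linarith⟩ (a + M * lam ^ 2)
      ⟨by linarith, by linarith⟩ (by linarith)
    rwa [add_sub_cancel_left] at this
  have htaylor := neg_half_mul_sq_le_sub_deriv_zero_mul hdf hf0 hlip (ha.trans (by linarith))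
  have hsq : a ^ 2 ≤ (lam * R₀) ^ 2 := by
    rw [← sq_abs]
    exact pow_le_pow_left₀ (abs_nonneg a) ha 2
  calc 0 = d₀ * (M * lam ^ 2) - K / 2 * (lam * R₀) ^ 2 := by
          rw [hM]; field_simp; ring
    _ ≤ d₀ * (M * lam ^ 2) - K / 2 * a ^ 2 := by gcongr
    _ ≤ (f (a + M * lam ^ 2) - f a) + (f a - deriv f 0 * a) := by linarith
    _ = f (a + M * lam ^ 2) - lam * deriv f 0 * uhat x := by ring

theorem stmt_18 {X : Type*} (f : ℝ → ℝ) (d₀ K R R₀ : ℝ)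
    (hf : ContDiff ℝ 1 f) (hf0 : f 0 = 0) (hd₀ : 0 < d₀) (hK : 0 ≤ K)
    (hlow : ∀ s : ℝ, |s| ≤ R → d₀ ≤ deriv f s)
    (hlip : ∀ s : ℝ, |s| ≤ R → |deriv f s - deriv f 0| ≤ K * |s|)
    (uhat : X → ℝ) (huhat : ∀ x, |uhat x| ≤ R₀)
    (M : ℝ) (hM : M = K * R₀ ^ 2 / (2 * d₀))
    (lam : ℝ) (hlam : 0 < lam) (hlam1 : lam ≤ 1) (hMlam : M * lam ≤ 1)
    (hrange : lam * R₀ + M * lam ^ 2 ≤ R) :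
    ∀ x, 0 ≤ f (lam * uhat x + M * lam ^ 2) - lam * deriv f 0 * uhat x :=
  stmt_18_general f d₀ K R R₀ hf hf0 hd₀ hK hlow hlip uhat huhat M hM lam hlam hrange
end
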